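/- For every real s ≥ 0 and every M ∈ ℕ with 2s < 2^M, the van der Corput sequence in base 2 satisfies F_{2^M}(s) = 2⌊s⌋. -/

import Mathlib

open scoped Classical

/-- Radical-inverse function in base 2. -/
noncomputable def g2 (n : ℕ) : ℝ :=
  ∑ j ∈ Finset.range (n + 1), (if n.testBit j then ((2 : ℝ) ^ (j + 1))⁻¹ else 0)

/-- Van der Corput sequence in base 2, indexed from 1, with x₁ = 0. -/
noncomputable def vdc (i : ℕ) : ℝ := g2 (i - 1)

/-- Distance to the nearest integer. -/
noncomputable def nint (x : ℝ) : ℝ := |x - round x|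

/-- Finite empiric pair correlation function of the van der Corput sequence in base 2. -/
noncomputable def F (N : ℕ) (s : ℝ) : ℝ :=
  (((Finset.Icc 1 N ×ˢ Finset.Icc 1 N).filter
      (fun p => p.1 ≠ p.2 ∧ nint (vdc p.1 - vdc p.2) ≤ s / N)).card : ℝ) / N


/-! The first `2 ^ M` terms of the van der Corput sequence are the points `k / 2 ^ M`,
`0 ≤ k < 2 ^ M`, listed in bit-reversed order. Labelling them by residues in `ZMod (2 ^ M)`,
`‖x_i - x_j‖ = |r| / 2 ^ M` where `r` is the centered representative of the difference of
the labels, so a pair counts exactly when `r` is a nonzero integer with `|r| ≤ ⌊s⌋`.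
Since `2 ⌊s⌋ < 2 ^ M`, every label has exactly `2 ⌊s⌋` such partners. -/

open Finset

def bitRev : ℕ → ℕ → ℕ
  | 0, _ => 0
  | M + 1, n => 2 ^ M * (n % 2) + bitRev M (n / 2)

theorem bitRev_lt (M n : ℕ) : bitRev M n < 2 ^ M := by
  induction M generalizing n with
  | zero => simp [bitRev]
  | succ M ih =>
    have := ih (n / 2)
    have := Nat.mod_lt n two_pos
    rw [bitRev, pow_succ]
    nlinarith

theorem bitRev_injOn (M : ℕ) : Set.InjOn (bitRev M) (Set.Iio (2 ^ M)) := by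
  induction M with
  | zero => intro a ha b hb _; simp_all
  | succ M ih =>
    intro a ha b hb hab
    simp only [Set.mem_Iio, pow_succ] at ha hb
    obtain ⟨hlow, hhigh⟩ : a % 2 = b % 2 ∧ bitRev M (a / 2) = bitRev M (b / 2) := by
      have := bitRev_lt M (a / 2)
      have := bitRev_lt M (b / 2)
      rw [bitRev, bitRev] at hab
      rcases Nat.mod_two_eq_zero_or_one a with h | h <;>
        rcases Nat.mod_two_eq_zero_or_one b with h' | h' <;>
        simp only [h, h', mul_zero, mul_one] at hab <;> omega
    have := ih (by simp; omega) (by simp; omega) hhigh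
    omega

theorem g2_eq_sum_range {n m : ℕ} (h : n < 2 ^ m) :
    g2 n = ∑ j ∈ range m, if n.testBit j then ((2 : ℝ) ^ (j + 1))⁻¹ else 0 := by
  have hvanish : ∀ k, n < 2 ^ k → ∀ j ≥ k,
      (if n.testBit j then ((2 : ℝ) ^ (j + 1))⁻¹ else 0) = 0 := fun k hk j hj => by
    rw [Nat.testBit_eq_false_of_lt (hk.trans_le (Nat.pow_le_pow_right two_pos hj))]
    rfl
  rw [g2]
  have hn : n < 2 ^ (n + 1) :=
    Nat.lt_two_pow_self.trans_le (Nat.pow_le_pow_right two_pos n.le_succ)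
  rcases le_total m (n + 1) with hm | hm
  · exact eventually_constant_sum (hvanish m h) hm
  · exact (eventually_constant_sum (hvanish (n + 1) hn) hm).symm

theorem g2_eq_mod_two_add_div_two (n : ℕ) : g2 n = ((n % 2 : ℕ) + g2 (n / 2)) / 2 := by
  rw [g2_eq_sum_range (m := n) ((Nat.div_le_self n 2).trans_lt Nat.lt_two_pow_self), g2,
    sum_range_succ', add_div, sum_div, add_comm]
  simp only [← Nat.testBit_div_two, Nat.testBit_zero]
  congr 1
  · rcases Nat.mod_two_eq_zero_or_one n with h | h <;> simp [h]
  · refine sum_congr rfl fun j _ => ?_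
    split_ifs <;> ring

theorem g2_eq_bitRev_div {M n : ℕ} (hn : n < 2 ^ M) : g2 n = bitRev M n / 2 ^ M := by
  induction M generalizing n with
  | zero => simp_all [g2, bitRev]
  | succ M ih =>
    have hn' : n / 2 < 2 ^ M := Nat.div_lt_of_lt_mul (by rwa [mul_comm, ← pow_succ])
    rw [g2_eq_mod_two_add_div_two, ih hn', bitRev]
    field_simp
    push_cast
    ring

theorem nint_add_intCast (x : ℝ) (k : ℤ) : nint (x + k) = nint x := by
  rw [nint, nint, round_add_intCast, Int.cast_add, add_sub_add_right_eq_sub]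

theorem nint_eq_abs {x : ℝ} (hx : |x| ≤ 1 / 2) : nint x = |x| := by
  refine le_antisymm (by simpa [nint] using round_le x 0) ?_
  rcases eq_or_ne (round x) 0 with h | h
  · simp [nint, h]
  · have : (1 : ℝ) ≤ |(round x : ℝ)| := by exact_mod_cast Int.one_le_abs h
    have := abs_sub_abs_le_abs_sub (round x : ℝ) x
    rw [nint, abs_sub_comm]
    linarith

theorem nint_intCast_div (n : ℕ) [NeZero n] (m : ℤ) :
    nint (m / n) = |((m : ZMod n).valMinAbs : ℝ)| / n := by
  set v := (m : ZMod n).valMinAbs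
  obtain ⟨k, hk⟩ : (n : ℤ) ∣ m - v := by
    rw [← ZMod.intCast_zmod_eq_zero_iff_dvd, Int.cast_sub, ZMod.coe_valMinAbs, sub_self]
  have hn : (0 : ℝ) < n := by exact_mod_cast Nat.pos_of_neZero n
  have hsplit : (m : ℝ) / n = v / n + k := by
    have hm : (m : ℝ) = v + n * k := by exact_mod_cast (by linarith : m = v + n * k)
    rw [hm]
    field_simp
  have hv := ZMod.valMinAbs_mem_Ioc (m : ZMod n)
  have hv₁ : (-n : ℝ) < v * 2 := by exact_mod_cast hv.1
  have hv₂ : (v * 2 : ℝ) ≤ n := by exact_mod_cast hv.2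
  rw [hsplit, nint_add_intCast, nint_eq_abs, abs_div, abs_of_pos hn]
  rw [abs_div, abs_of_pos hn, div_le_iff₀ hn, abs_le]
  constructor <;> linarith

theorem card_filter_sub_eq_mul {G : Type*} [AddGroup G] [Fintype G] (P : G → Prop)
    [DecidablePred P] : #{p : G × G | P (p.1 - p.2)} = Fintype.card G * #{d | P d} := by
  rw [← card_univ, ← card_product]
  exact card_equiv (Equiv.prodShear (Equiv.refl G) Equiv.subLeft) (by simp)

theorem card_filter_abs_valMinAbs_le {n : ℕ} [NeZero n] {K : ℤ} (hK : 0 ≤ K)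
    (hKn : 2 * K < n) :
    (#{d : ZMod n | d ≠ 0 ∧ |d.valMinAbs| ≤ K} : ℤ) = 2 * K := by
  have himage : image ZMod.valMinAbs {d : ZMod n | d ≠ 0 ∧ |d.valMinAbs| ≤ K} =
      (Icc (-K) K).erase 0 := by
    ext z
    simp only [mem_image, mem_filter, mem_univ, true_and, mem_erase, mem_Icc, ← abs_le]
    constructor
    · rintro ⟨d, ⟨hd, hdK⟩, rfl⟩
      exact ⟨by rwa [ne_eq, ZMod.valMinAbs_eq_zero], hdK⟩
    · rintro ⟨hz, hzK⟩
      have hval : (z : ZMod n).valMinAbs = z := by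
        rw [ZMod.valMinAbs_spec]
        refine ⟨rfl, ?_, ?_⟩ <;> cases abs_le.mp hzK <;> omega
      refine ⟨z, ⟨?_, by rwa [hval]⟩, hval⟩
      rwa [ne_eq, ← ZMod.valMinAbs_eq_zero, hval]
  rw [← card_image_of_injective _ (fun _ _ => ZMod.valMinAbs_inj.mp), himage,
    card_erase_of_mem (by simpa using hK), Int.card_Icc]
  omega

theorem card_filter_product_sub_eq_mul {ι G : Type*} [AddGroup G] [Fintype G] {s : Finset ι}
    {f : ι → G} (hf : Set.BijOn f s Set.univ) (P : G → Prop) [DecidablePred P] :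
    #{p ∈ s ×ˢ s | P (f p.1 - f p.2)} = Fintype.card G * #{d | P d} := by
  have hff := hf.prodMap hf
  rw [← card_filter_sub_eq_mul]
  refine card_nbij (fun p => (f p.1, f p.2)) (fun p hp => by simp_all) ?_ ?_
  · exact hff.injOn.mono fun p hp => by simp_all
  · intro q hq
    obtain ⟨p, hp, rfl⟩ := hff.surjOn (by simp : q ∈ Set.univ ×ˢ Set.univ)
    exact ⟨p, by simp_all, rfl⟩

def vdcResidue (M i : ℕ) : ZMod (2 ^ M) := bitRev M (i - 1)

theorem vdcResidue_bijOn (M : ℕ) : Set.BijOn (vdcResidue M) (Icc 1 (2 ^ M)) Set.univ := by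
  have hinj : Set.InjOn (vdcResidue M) (Icc 1 (2 ^ M)) := by
    intro i hi j hj hij
    simp only [coe_Icc, Set.mem_Icc] at hi hj
    have := congrArg ZMod.val hij
    simp only [vdcResidue, ZMod.val_natCast_of_lt (bitRev_lt _ _)] at this
    have := bitRev_injOn M (by simp; omega) (by simp; omega) this
    omega
  refine ⟨Set.mapsTo_univ _ _, hinj, ?_⟩
  have himage : image (vdcResidue M) (Icc 1 (2 ^ M)) = univ := by
    refine eq_univ_of_card _ ?_
    rw [card_image_of_injOn hinj, ZMod.card]
    simp
  intro d _
  obtain ⟨i, hi, rfl⟩ := mem_image.mp (himage ▸ mem_univ d)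
  exact ⟨i, hi, rfl⟩

theorem nint_vdc_sub_vdc {M i j : ℕ} (hi : i ∈ Icc 1 (2 ^ M)) (hj : j ∈ Icc 1 (2 ^ M)) :
    nint (vdc i - vdc j) = |((vdcResidue M i - vdcResidue M j).valMinAbs : ℝ)| / 2 ^ M := by
  simp only [mem_Icc] at hi hj
  have h := nint_intCast_div (2 ^ M) ((bitRev M (i - 1) : ℤ) - bitRev M (j - 1))
  push_cast at h
  rw [vdc, vdc, g2_eq_bitRev_div (by omega : i - 1 < 2 ^ M),
    g2_eq_bitRev_div (by omega : j - 1 < 2 ^ M), ← sub_div, h, vdcResidue, vdcResidue]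

theorem stmt19 (s : ℝ) (hs : 0 ≤ s) (M : ℕ) (h : 2 * s < 2 ^ M) :
    F (2 ^ M) s = 2 * (⌊s⌋ : ℝ) := by
  have hpair : ∀ p ∈ Icc 1 (2 ^ M) ×ˢ Icc 1 (2 ^ M),
      (p.1 ≠ p.2 ∧ nint (vdc p.1 - vdc p.2) ≤ s / (2 ^ M : ℕ)) ↔
        (vdcResidue M p.1 - vdcResidue M p.2 ≠ 0 ∧
          |(vdcResidue M p.1 - vdcResidue M p.2).valMinAbs| ≤ ⌊s⌋) := by
    rintro ⟨i, j⟩ hij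
    obtain ⟨hi, hj⟩ := mem_product.mp hij
    rw [sub_ne_zero, (vdcResidue_bijOn M).injOn.ne_iff hi hj, nint_vdc_sub_vdc hi hj,
      Int.le_floor, Int.cast_abs, Nat.cast_pow, Nat.cast_ofNat,
      div_le_div_iff_of_pos_right (by positivity)]
  have hfloor : 2 * ⌊s⌋ < (2 ^ M : ℕ) := by
    have : (⌊s⌋ : ℝ) ≤ s := Int.floor_le s
    exact_mod_cast (by push_cast; linarith : (2 * ⌊s⌋ : ℝ) < (2 ^ M : ℕ))
  have hcount := card_filter_abs_valMinAbs_le (Int.floor_nonneg.mpr hs) hfloor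
  rw [F, filter_congr hpair, card_filter_product_sub_eq_mul (vdcResidue_bijOn M)
    (fun d => d ≠ 0 ∧ |d.valMinAbs| ≤ ⌊s⌋), ZMod.card]
  push_cast
  field_simp
  exact_mod_cast hcount
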